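/- arXiv:1612.02569 — 2 statements merged into one kernel-verified Lean document; each statement's English description precedes it below -/
import Mathlib

section
/- Let X₁, …, X_n be a family of {0,1}-valued random variables such that both (X_i)_{i=1}^n and (1 − X_i)_{i=1}^n are negatively correlated, i.e. for every subset S ⊆ {1,…,n}, E[∏_{i∈S} X_i] ≤ ∏_{i∈S} E[X_i] and E[∏_{i∈S} (1 − X_i)] ≤ ∏_{i∈S} E[1 − X_i]. Let p_i = P[X_i = 1] and p = (1/n) ∑_{i=1}^n p_i. Then for every λ > 0, P[∑_{i=1}^n X_i < p·n − λ] ≤ exp(−λ² / (2 p n)). -/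
/-! Chernoff's method. By Markov's inequality, `P[∑ X i < pn - λ] ≤ e^{t(pn - λ)} E[e^{-t ∑ X i}]`
for `t ≥ 0`. On `{0,1}` the function `x ↦ e^{-tx}` is affine in `1 - x`, so `e^{-t ∑ X i}` is a
product of affine functions of the `1 - X i`; expanded over subsets it is a nonnegative
combination of the moments `E[∏ i ∈ S, (1 - X i)]`, and negative correlation bounds its
expectation by the value for independent variables, `∏ i, (1 - (1 - e^{-t}) p i) ≤
e^{-(1 - e^{-t}) pn}`. Choosing `t = λ / (pn)` and using `1 - e^{-t} ≥ t - t² / 2` gives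
`e^{-λ² / (2pn)}`. -/

open MeasureTheory ProbabilityTheory Real Finset

lemma Real.exp_neg_le_one_sub_add_sq_div_two {t : ℝ} (ht : 0 ≤ t) :
    exp (-t) ≤ 1 - t + t ^ 2 / 2 := by
  have h3 : 1 + t + t ^ 2 / 2 ≤ exp t := by
    have := sum_le_exp_of_nonneg ht 3
    simp only [sum_range_succ, Nat.factorial] at this
    norm_num at this
    linarith
  rw [exp_neg, inv_eq_one_div, div_le_iff₀ (exp_pos t)]
  nlinarith [sq_nonneg (t * t), sq_nonneg t]

lemma Real.exp_neg_mul_of_zero_or_one {x : ℝ} (hx : x = 0 ∨ x = 1) (t : ℝ) :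
    exp (-t * x) = (1 - exp (-t)) * (1 - x) + exp (-t) := by
  rcases hx with rfl | rfl <;> simp

def NegativelyCorrelated {Ω ι : Type*} [MeasurableSpace Ω] (Y : ι → Ω → ℝ) (μ : Measure Ω) :
    Prop :=
  ∀ S : Finset ι, ∫ ω, ∏ i ∈ S, Y i ω ∂μ ≤ ∏ i ∈ S, ∫ ω, Y i ω ∂μ

section

variable {Ω ι : Type*} [MeasurableSpace Ω] {μ : Measure Ω}

lemma prod_mul_add_eq_sum_powerset [Fintype ι] [DecidableEq ι] (y : ι → ℝ) (a b : ℝ) :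
    ∏ i, (b * y i + a) = ∑ S ∈ univ.powerset, b ^ #S * a ^ #(univ \ S) * ∏ i ∈ S, y i := by
  rw [prod_add]
  refine sum_congr rfl fun S _ => ?_
  rw [prod_mul_distrib, prod_const, prod_const]
  ring

theorem NegativelyCorrelated.integral_prod_mul_add_le [Fintype ι] {Y : ι → Ω → ℝ}
    (hY : NegativelyCorrelated Y μ)
    (hint : ∀ S : Finset ι, Integrable (fun ω => ∏ i ∈ S, Y i ω) μ) {a b : ℝ}
    (ha : 0 ≤ a) (hb : 0 ≤ b) :
    ∫ ω, ∏ i, (b * Y i ω + a) ∂μ ≤ ∏ i, (b * ∫ ω, Y i ω ∂μ + a) := by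
  classical
  simp_rw [prod_mul_add_eq_sum_powerset]
  rw [integral_finsetSum _ fun S _ => (hint S).const_mul _]
  refine sum_le_sum fun S _ => ?_
  rw [integral_const_mul]
  exact mul_le_mul_of_nonneg_left (hY S) (by positivity)

lemma integrable_prod_of_abs_le_one [IsFiniteMeasure μ] {Y : ι → Ω → ℝ}
    (hmeas : ∀ i, Measurable (Y i)) (hY : ∀ i ω, |Y i ω| ≤ 1) (S : Finset ι) :
    Integrable (fun ω => ∏ i ∈ S, Y i ω) μ :=
  .of_bound (Finset.measurable_prod S fun i _ => hmeas i).aestronglyMeasurable 1 <|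
    .of_forall fun ω => by
      rw [norm_prod]
      exact prod_le_one (fun i _ => norm_nonneg _) fun i _ => hY i ω

lemma integrable_exp_neg_mul_of_nonneg [IsFiniteMeasure μ] {S : Ω → ℝ} (hmeas : Measurable S)
    (hS : ∀ ω, 0 ≤ S ω) {t : ℝ} (ht : 0 ≤ t) : Integrable (fun ω => exp (-t * S ω)) μ :=
  .of_bound (by fun_prop) 1 <| .of_forall fun ω => by
    rw [norm_of_nonneg (exp_pos _).le, exp_le_one_iff]
    nlinarith [hS ω]

lemma integral_eq_measureReal_of_zero_or_one {X : Ω → ℝ} (hmeas : Measurable X)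
    (h01 : ∀ ω, X ω = 0 ∨ X ω = 1) : ∫ ω, X ω ∂μ = μ.real {ω | X ω = 1} := by
  have hX : X = {ω | X ω = 1}.indicator 1 := by
    ext ω
    rcases h01 ω with h | h <;> simp [h]
  conv_lhs => rw [hX]
  exact integral_indicator_one (hmeas (measurableSet_singleton 1))

theorem mgf_neg_sum_le_of_negativelyCorrelated [IsProbabilityMeasure μ] [Fintype ι]
    {X : ι → Ω → ℝ} (hmeas : ∀ i, Measurable (X i)) (h01 : ∀ i ω, X i ω = 0 ∨ X i ω = 1)
    (hneg : NegativelyCorrelated (fun i ω => 1 - X i ω) μ) {t : ℝ} (ht : 0 ≤ t) :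
    mgf (fun ω => ∑ i, X i ω) μ (-t) ≤ exp (-(1 - exp (-t)) * ∑ i, ∫ ω, X i ω ∂μ) := by
  set a := exp (-t)
  set b := 1 - a
  have hb : 0 ≤ b := sub_nonneg.mpr (exp_le_one_iff.mpr (neg_nonpos.mpr ht))
  have habs : ∀ i ω, |X i ω| ≤ 1 ∧ |1 - X i ω| ≤ 1 := fun i ω => by
    rcases h01 i ω with h | h <;> simp [h]
  have hint : ∀ i, Integrable (X i) μ := fun i =>
    .of_bound (hmeas i).aestronglyMeasurable 1 (.of_forall fun ω => (habs i ω).1)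
  have hfactor : ∀ ω, exp (-t * ∑ i, X i ω) = ∏ i, (b * (1 - X i ω) + a) := fun ω => by
    rw [mul_sum, exp_sum]
    exact prod_congr rfl fun i _ => exp_neg_mul_of_zero_or_one (h01 i ω) t
  calc mgf (fun ω => ∑ i, X i ω) μ (-t)
      = ∫ ω, ∏ i, (b * (1 - X i ω) + a) ∂μ := integral_congr_ae (.of_forall hfactor)
    _ ≤ ∏ i, (b * ∫ ω, (1 - X i ω) ∂μ + a) :=
        hneg.integral_prod_mul_add_le
          (integrable_prod_of_abs_le_one (fun i => measurable_const.sub (hmeas i))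
            fun i ω => (habs i ω).2)
          (exp_pos _).le hb
    _ ≤ ∏ i, exp (-(b * ∫ ω, X i ω ∂μ)) := by
        refine prod_le_prod (fun i _ => ?_) fun i _ => ?_
        · have : 0 ≤ ∫ ω, (1 - X i ω) ∂μ :=
            integral_nonneg fun ω => by rcases h01 i ω with h | h <;> simp [h]
          positivity
        · rw [integral_sub (integrable_const 1) (hint i)]
          simp only [integral_const, probReal_univ, smul_eq_mul, one_mul]
          linarith [add_one_le_exp (-(b * ∫ ω, X i ω ∂μ))]
    _ = exp (-b * ∑ i, ∫ ω, X i ω ∂μ) := by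
        rw [← exp_sum, mul_sum]
        simp only [neg_mul]

theorem measureReal_lt_sub_le_of_mgf_le [IsFiniteMeasure μ] {S : Ω → ℝ} {m lam : ℝ}
    (hm : 0 < m) (hlam : 0 ≤ lam)
    (hint : ∀ t, 0 ≤ t → Integrable (fun ω => exp (-t * S ω)) μ)
    (hmgf : ∀ t, 0 ≤ t → mgf S μ (-t) ≤ exp (-(1 - exp (-t)) * m)) :
    μ.real {ω | S ω < m - lam} ≤ exp (-lam ^ 2 / (2 * m)) := by
  set t := lam / m
  have ht : 0 ≤ t := div_nonneg hlam hm.le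
  have htm : t * m = lam := div_mul_cancel₀ lam hm.ne'
  have hquad := mul_le_mul_of_nonneg_left (exp_neg_le_one_sub_add_sq_div_two ht) hm.le
  calc μ.real {ω | S ω < m - lam}
      ≤ μ.real {ω | S ω ≤ m - lam} :=
        measureReal_mono (Set.ofPred_subset_ofPred.mpr fun _ => le_of_lt)
    _ ≤ exp (-(-t) * (m - lam)) * mgf S μ (-t) :=
        measure_le_le_exp_mul_mgf _ (neg_nonpos.mpr ht) (hint t ht)
    _ ≤ exp (-(-t) * (m - lam)) * exp (-(1 - exp (-t)) * m) := by
        gcongr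
        exact hmgf t ht
    _ ≤ exp (-lam ^ 2 / (2 * m)) := by
        rw [← exp_add]
        gcongr
        have : -lam ^ 2 / (2 * m) = -(t * lam) / 2 := by
          rw [← htm]; field_simp
        rw [this]
        nlinarith

end

theorem chernoff_negatively_correlated_general
    {Ω : Type*} [MeasurableSpace Ω] (μ : Measure Ω) [IsProbabilityMeasure μ]
    (n : ℕ) (X : Fin n → Ω → ℝ)
    (hmeas : ∀ i, Measurable (X i))
    (h01 : ∀ i ω, X i ω = 0 ∨ X i ω = 1)
    (hneg' : ∀ S : Finset (Fin n),
      (∫ ω, ∏ i ∈ S, (1 - X i ω) ∂μ) ≤ ∏ i ∈ S, ∫ ω, (1 - X i ω) ∂μ)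
    (p : ℝ) (hp : p = (1 / (n : ℝ)) * ∑ i, (μ {ω | X i ω = 1}).toReal)
    (lam : ℝ) (hlam : 0 < lam) :
    (μ {ω | ∑ i, X i ω < p * n - lam}).toReal ≤ Real.exp (-lam ^ 2 / (2 * p * n)) := by
  have hmean : ∑ i, ∫ ω, X i ω ∂μ = p * n := by
    simp only [integral_eq_measureReal_of_zero_or_one (hmeas _) (h01 _), hp, ← measureReal_def]
    rcases n.eq_zero_or_pos with rfl | hn
    · simp
    · field_simp
  have hX_nonneg : ∀ i ω, 0 ≤ X i ω := fun i ω => by rcases h01 i ω with h | h <;> simp [h]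
  have hmean_nonneg : 0 ≤ p * n :=
    hmean ▸ sum_nonneg fun i _ => integral_nonneg (hX_nonneg i)
  rw [← measureReal_def, mul_assoc]
  rcases hmean_nonneg.eq_or_lt with hzero | hpos
  · simp [← hzero]
  refine measureReal_lt_sub_le_of_mgf_le hpos hlam.le (fun t ht => ?_) fun t ht => ?_
  · exact integrable_exp_neg_mul_of_nonneg (Finset.measurable_sum _ fun i _ => hmeas i)
      (fun ω => sum_nonneg fun i _ => hX_nonneg i ω) ht
  · exact hmean ▸ mgf_neg_sum_le_of_negativelyCorrelated hmeas h01 hneg' ht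

/-- **Chernoff lower-tail bound for negatively correlated `{0,1}`-valued random
variables.**  Let `X 1, …, X n` be `{0,1}`-valued random variables such that both the
family `(X i)` and the family `(1 - X i)` are negatively correlated, i.e. for every
subset `S ⊆ {1,…,n}`, `E[∏ i in S, X i] ≤ ∏ i in S, E[X i]` and
`E[∏ i in S, (1 - X i)] ≤ ∏ i in S, E[1 - X i]`.  Let `p i = P[X i = 1]` and
`p = (1/n) ∑ i, p i`.  Then for every `λ > 0`,
`P[∑ i, X i < p·n − λ] ≤ exp(−λ² / (2 p n))`. -/
theorem chernoff_negatively_correlated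
    {Ω : Type*} [MeasurableSpace Ω] (μ : Measure Ω) [IsProbabilityMeasure μ]
    (n : ℕ) (hn : 0 < n) (X : Fin n → Ω → ℝ)
    (hmeas : ∀ i, Measurable (X i))
    (h01 : ∀ i ω, X i ω = 0 ∨ X i ω = 1)
    (hneg : ∀ S : Finset (Fin n),
      (∫ ω, ∏ i ∈ S, X i ω ∂μ) ≤ ∏ i ∈ S, ∫ ω, X i ω ∂μ)
    (hneg' : ∀ S : Finset (Fin n),
      (∫ ω, ∏ i ∈ S, (1 - X i ω) ∂μ) ≤ ∏ i ∈ S, ∫ ω, (1 - X i ω) ∂μ)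
    (p : ℝ) (hp : p = (1 / (n : ℝ)) * ∑ i, (μ {ω | X i ω = 1}).toReal)
    (lam : ℝ) (hlam : 0 < lam) :
    (μ {ω | ∑ i, X i ω < p * n - lam}).toReal ≤ Real.exp (-lam ^ 2 / (2 * p * n)) :=
  chernoff_negatively_correlated_general μ n X hmeas h01 hneg' p hp lam hlam
end

section
/- For each natural number a with 1 ≤ a ≤ n/ln n, the number of cuts A of a spanning tree of an n-vertex graph whose edge boundary in the tree has size a is at most C(n−1, a), and consequently ∑_{a=1}^{n/ln(n)} C(n−1, a) · exp(−(k−1) α a ln(n) p/8) ≤ ∑_{a=1}^{n/ln(n)} exp( a ( ln(e/a) + ln(n)(1 − (k−1) α p / 8) ) ), which is o(1) as n → ∞ whenever (k−1)α > 8/p. -/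
open scoped Classical

/-- The edge boundary `∂_H A` of a vertex set `A` within an edge set `H`. -/
noncomputable def eBoundary {V : Type*} [DecidableEq V]
    (A : Finset V) (H : Finset (Sym2 V)) : Finset (Sym2 V) :=
  H.filter (fun a => ∃ u v, a = s(u, v) ∧ u ∈ A ∧ v ∉ A)

/- The tree boundary of a cut is an `a`-subset of the `n - 1` tree edges, whence the count
`C(n - 1, a)`. With `C(m, a) ≤ (m e / a)^a` the `a`-th term of the union bound is at most
`exp (a (ln (e / a) + ln n (1 - c)))`, `c = (k - 1) α p / 8`, and since `ln (e / a) ≤ 1` this is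
at most `r_n ^ a` with `r_n = e n^(1 - c)`. For `c > 1` we have `r_n → 0`, so the whole sum is
dominated by the geometric series `r_n / (1 - r_n) → 0`. -/

open Real Finset Filter Topology

lemma eBoundary_subset {V : Type*} [DecidableEq V] (A : Finset V) (H : Finset (Sym2 V)) :
    eBoundary A H ⊆ H :=
  filter_subset _ _

lemma card_filter_image_eBoundary_le_choose {V : Type*} [Fintype V] [DecidableEq V]
    (H : Finset (Sym2 V)) (a : ℕ) :
    ((univ.image fun A : Finset V => eBoundary A H).filter (·.card = a)).card ≤
      H.card.choose a := by
  rw [← card_powersetCard]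
  refine card_le_card fun S hS => ?_
  obtain ⟨hSimage, hScard⟩ := mem_filter.1 hS
  obtain ⟨A, -, rfl⟩ := mem_image.1 hSimage
  exact mem_powersetCard.2 ⟨eBoundary_subset A H, hScard⟩

theorem Nat.choose_le_mul_exp_one_div_pow (m a : ℕ) :
    (m.choose a : ℝ) ≤ (m * exp 1 / a) ^ a := by
  rcases a.eq_zero_or_pos with rfl | ha
  · simp
  have hfac : (0 : ℝ) < a.factorial := mod_cast a.factorial_pos
  have hpow_le : (a : ℝ) ^ a ≤ exp 1 ^ a * a.factorial := by
    have := pow_div_factorial_le_exp (a : ℝ) (Nat.cast_nonneg a) a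
    rwa [← exp_one_pow, div_le_iff₀ hfac] at this
  calc (m.choose a : ℝ) ≤ m ^ a / a.factorial := Nat.choose_le_pow_div a m
    _ ≤ (m * exp 1 / a) ^ a := by
      rw [div_pow, mul_pow, div_le_div_iff₀ hfac (by positivity)]
      calc (m : ℝ) ^ a * a ^ a ≤ m ^ a * (exp 1 ^ a * a.factorial) := by gcongr
        _ = _ := by ring

lemma choose_pred_mul_exp_le {n : ℕ} (hn : 0 < n) (a : ℕ) (c : ℝ) :
    ((n - 1).choose a : ℝ) * exp (-(c * a * log n)) ≤
      exp (a * (log (exp 1 / a) + log n * (1 - c))) := by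
  rcases a.eq_zero_or_pos with rfl | ha
  · simp
  have ha' : (0 : ℝ) < a := mod_cast ha
  have hn' : (0 : ℝ) < n := mod_cast hn
  have hexp : (n * exp 1 / a) ^ a * exp (-(c * a * log n)) =
      exp (a * (log (exp 1 / a) + log n * (1 - c))) := by
    rw [← exp_log (by positivity : (0 : ℝ) < n * exp 1 / a), ← exp_nat_mul, ← exp_add,
      log_div (by positivity) ha'.ne', log_mul hn'.ne' (exp_pos 1).ne',
      log_div (exp_pos 1).ne' ha'.ne']
    ring_nf
  rw [← hexp]
  gcongr
  refine (Nat.choose_le_mul_exp_one_div_pow _ a).trans ?_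
  gcongr
  exact_mod_cast Nat.sub_le n 1

lemma exp_mul_log_exp_one_div_add_le {a : ℕ} (ha : 1 ≤ a) (L : ℝ) :
    exp (a * (log (exp 1 / a) + L)) ≤ exp (1 + L) ^ a := by
  rw [← exp_nat_mul]
  gcongr
  rw [log_div (exp_pos 1).ne' (by positivity), log_exp]
  linarith [log_natCast_nonneg a]

lemma tendsto_sum_Icc_one_pow_nhds_zero {ι : Type*} {l : Filter ι} {r : ι → ℝ} (N : ι → ℕ)
    (hr0 : ∀ i, 0 ≤ r i) (hr : Tendsto r l (𝓝 0)) :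
    Tendsto (fun i => ∑ a ∈ Icc 1 (N i), r i ^ a) l (𝓝 0) := by
  have hgeom : Tendsto (fun i => r i / (1 - r i)) l (𝓝 (0 / (1 - 0))) :=
    hr.div (tendsto_const_nhds.sub hr) (by norm_num)
  rw [sub_zero, zero_div] at hgeom
  refine squeeze_zero' (.of_forall fun i => sum_nonneg fun a _ => pow_nonneg (hr0 i) a) ?_
    hgeom
  filter_upwards [hr.eventually (gt_mem_nhds one_pos)] with i hi
  rw [← Ico_add_one_right_eq_Icc]
  simpa using geom_sum_Ico_le_of_lt_one (m := 1) (n := N i + 1) (hr0 i) hi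

lemma tendsto_exp_one_add_log_mul_nhds_zero {c : ℝ} (hc : 1 < c) :
    Tendsto (fun n : ℕ => exp (1 + log n * (1 - c))) atTop (𝓝 0) :=
  tendsto_exp_atBot.comp <| tendsto_atBot_add_const_left _ 1 <|
    (tendsto_log_atTop.comp tendsto_natCast_atTop_atTop).atTop_mul_const_of_neg (by linarith)

theorem bad_cuts_union_bound_general
    (k : ℕ) (α p : ℝ) (hp0 : 0 < p) :
    -- the number of cuts of an `n`-vertex tree with tree-boundary of size `a`
    -- is at most `C(n-1, a)`
    (∀ (n : ℕ) (V : Type) [Fintype V] [DecidableEq V],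
      Fintype.card V = n →
      ∀ (T : SimpleGraph V), T.IsTree →
      ∀ a : ℕ, 1 ≤ a → (a : ℝ) ≤ (n : ℝ) / Real.log n →
        (((Finset.univ : Finset (Finset V)).image
            (fun A => eBoundary A T.edgeFinset)).filter
          (fun S => S.card = a)).card ≤ Nat.choose (n - 1) a) ∧
    -- the union-bound sum is dominated by the exponential sum
    (∀ n : ℕ, 2 ≤ n →
      ∑ a ∈ Finset.Icc 1 ⌊(n : ℝ) / Real.log n⌋₊,
          (Nat.choose (n - 1) a : ℝ) *
            Real.exp (-((k : ℝ) - 1) * α * (a : ℝ) * Real.log n * p / 8) ≤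
        ∑ a ∈ Finset.Icc 1 ⌊(n : ℝ) / Real.log n⌋₊,
          Real.exp ((a : ℝ) * (Real.log (Real.exp 1 / (a : ℝ)) +
            Real.log n * (1 - ((k : ℝ) - 1) * α * p / 8)))) ∧
    -- and it is `o(1)` as `n → ∞` whenever `(k−1)α > 8/p`
    (((k : ℝ) - 1) * α > 8 / p →
      Filter.Tendsto (fun n : ℕ =>
          ∑ a ∈ Finset.Icc 1 ⌊(n : ℝ) / Real.log n⌋₊,
            (Nat.choose (n - 1) a : ℝ) *
              Real.exp (-((k : ℝ) - 1) * α * (a : ℝ) * Real.log n * p / 8))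
        Filter.atTop (nhds 0)) := by
  have hexponent (a n : ℕ) :
      -((k : ℝ) - 1) * α * a * log n * p / 8 = -((k - 1) * α * p / 8 * a * log n) := by
    ring
  simp only [hexponent]
  refine ⟨fun n V _ _ hV T hT a _ _ => ?_,
    fun n hn => sum_le_sum fun a _ => choose_pred_mul_exp_le (by omega) a _, fun hk => ?_⟩
  · rw [← hV, ← hT.card_edgeFinset]
    exact card_filter_image_eBoundary_le_choose _ a
  · have hc : 1 < ((k : ℝ) - 1) * α * p / 8 := by
      rw [gt_iff_lt, div_lt_iff₀ hp0] at hk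
      linarith
    refine squeeze_zero' (.of_forall fun n => sum_nonneg fun a _ => by positivity) ?_
      (tendsto_sum_Icc_one_pow_nhds_zero (fun n : ℕ => ⌊(n : ℝ) / log n⌋₊)
        (fun n => (exp_pos _).le) (tendsto_exp_one_add_log_mul_nhds_zero hc))
    filter_upwards [eventually_ge_atTop 1] with n hn
    exact sum_le_sum fun a ha => (choose_pred_mul_exp_le hn a _).trans
      (exp_mul_log_exp_one_div_add_le (mem_Icc.1 ha).1 _)

/-- **Union bound over bad cuts.**  For each `1 ≤ a ≤ n/ln n`, the number of cuts of a
spanning tree of an `n`-vertex graph whose edge boundary in the tree has size `a`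
(cuts being identified with their edge boundary in the tree) is at most `C(n−1, a)`;
consequently
`∑_{a=1}^{n/ln n} C(n−1, a) · exp(−(k−1) α a ln(n) p/8)
  ≤ ∑_{a=1}^{n/ln n} exp( a ( ln(e/a) + ln(n)(1 − (k−1) α p / 8) ) )`,
which is `o(1)` as `n → ∞` whenever `(k−1)α > 8/p`. -/
theorem bad_cuts_union_bound
    (k : ℕ) (α p : ℝ) (hα : 0 < α) (hp0 : 0 < p) (hp1 : p ≤ 1) :
    -- the number of cuts of an `n`-vertex tree with tree-boundary of size `a`
    -- is at most `C(n-1, a)`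
    (∀ (n : ℕ) (V : Type) [Fintype V] [DecidableEq V],
      Fintype.card V = n →
      ∀ (T : SimpleGraph V), T.IsTree →
      ∀ a : ℕ, 1 ≤ a → (a : ℝ) ≤ (n : ℝ) / Real.log n →
        (((Finset.univ : Finset (Finset V)).image
            (fun A => eBoundary A T.edgeFinset)).filter
          (fun S => S.card = a)).card ≤ Nat.choose (n - 1) a) ∧
    -- the union-bound sum is dominated by the exponential sum
    (∀ n : ℕ, 2 ≤ n →
      ∑ a ∈ Finset.Icc 1 ⌊(n : ℝ) / Real.log n⌋₊,
          (Nat.choose (n - 1) a : ℝ) *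
            Real.exp (-((k : ℝ) - 1) * α * (a : ℝ) * Real.log n * p / 8) ≤
        ∑ a ∈ Finset.Icc 1 ⌊(n : ℝ) / Real.log n⌋₊,
          Real.exp ((a : ℝ) * (Real.log (Real.exp 1 / (a : ℝ)) +
            Real.log n * (1 - ((k : ℝ) - 1) * α * p / 8)))) ∧
    -- and it is `o(1)` as `n → ∞` whenever `(k−1)α > 8/p`
    (((k : ℝ) - 1) * α > 8 / p →
      Filter.Tendsto (fun n : ℕ =>
          ∑ a ∈ Finset.Icc 1 ⌊(n : ℝ) / Real.log n⌋₊,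
            (Nat.choose (n - 1) a : ℝ) *
              Real.exp (-((k : ℝ) - 1) * α * (a : ℝ) * Real.log n * p / 8))
        Filter.atTop (nhds 0)) :=
  bad_cuts_union_bound_general k α p hp0
end
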